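/- Let G be a finite simple graph and g,f:V(G)→ℤ⁺ with g(x)≤f(x) for all x. Then G has all fractional (g,f)-factors (i.e., a fractional r-factor for every integer-valued r with g≤r≤f pointwise) if and only if for every S⊆V(G), with T={x∈V(G)∖S : d_{G−S}(x)<f(x)}, one has g(S)+∑_{x∈T} d_{G−S}(x)−f(T) ≥ 0. -/

import Mathlib

/-!
A fractional `r`-factor of `G` is the same as a fractional perfect `r`-matching of the
bipartite double cover of `G` (symmetrize `w x y` to `(w x y + w y x) / 2`), and the latter
exists by max-flow/min-cut as soon as `r(T) ≤ r(S) + ∑_{x ∈ T} d_{G-S}(x)` for all `S, T`.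
For disjoint `S, T` this inequality follows from the hypothesis with `g ≤ r ≤ f`, since
`T ↦ ∑_{x ∈ T} (f x - d_{G-S}(x))` is maximised at `T = {x ∉ S | d_{G-S}(x) < f x}`; the case of
overlapping `S, T` reduces to the pair `S \ T, T \ S`. Conversely, the inequality for a
factor with `r = f` on `T` and `r = g` elsewhere is the necessity of the condition.
-/

open Finset

/-- `h` is an indicator function of a fractional `r`-factor of `G`:
a symmetric edge-weighting with values in `[0,1]`, supported on edges of `G`,
whose weighted degree at each vertex `x` equals `r x`. -/
def IsFracFactor {V : Type*} [Fintype V] (G : SimpleGraph V) (r : V → ℕ)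
    (h : V → V → ℝ) : Prop :=
  (∀ x y, h x y = h y x) ∧ (∀ x y, 0 ≤ h x y ∧ h x y ≤ 1) ∧
  (∀ x y, ¬ G.Adj x y → h x y = 0) ∧ ∀ x : V, ∑ y : V, h x y = (r x : ℝ)

/-- `G` has a fractional `r`-factor. -/
def HasFracFactor {V : Type*} [Fintype V] (G : SimpleGraph V) (r : V → ℕ) : Prop :=
  ∃ h, IsFracFactor G r h

/-- `G` has all fractional `(g,f)`-factors excluding `H`: for every integer-valued
`r` with `g ≤ r ≤ f` pointwise, `G - E(H)` has a fractional `r`-factor. -/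
def HasAllFracExcl {V : Type*} [Fintype V] (G H : SimpleGraph V) (g f : V → ℕ) : Prop :=
  ∀ r : V → ℕ, (∀ x, g x ≤ r x ∧ r x ≤ f x) → HasFracFactor (G \ H) r

/-- `G` has all fractional `(g,f)`-factors. -/
def HasAllFrac {V : Type*} [Fintype V] (G : SimpleGraph V) (g f : V → ℕ) : Prop :=
  ∀ r : V → ℕ, (∀ x, g x ≤ r x ∧ r x ≤ f x) → HasFracFactor G r

/-- Degree of `x` in the induced subgraph `G - S`. -/
def degOut {V : Type*} [Fintype V] [DecidableEq V] (G : SimpleGraph V)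
    [DecidableRel G.Adj] (S : Finset V) (x : V) : ℕ :=
  (Sᶜ.filter fun y => G.Adj x y).card

/-- Number of edges of `G` with one end in `S` and the other in `T`
(for disjoint `S`, `T`). -/
def eBtw {V : Type*} [Fintype V] [DecidableEq V] (G : SimpleGraph V)
    [DecidableRel G.Adj] (S T : Finset V) : ℕ :=
  ∑ x ∈ S, (T.filter fun y => G.Adj x y).card

open Filter Topology

lemma eventually_add_mul_le {a b c : ℝ} (hab : a ≤ b) (h : 0 < c → a < b) :
    ∀ᶠ ε in 𝓝[>] (0 : ℝ), a + ε * c ≤ b := by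
  rcases le_or_gt c 0 with hc | hc
  · filter_upwards [self_mem_nhdsWithin] with ε (hε : 0 < ε)
    nlinarith
  · have : Tendsto (fun ε : ℝ => a + ε * c) (𝓝 0) (𝓝 a) :=
      (continuous_const.add (continuous_id.mul continuous_const)).tendsto' 0 a (by simp)
    exact ((this.eventually (gt_mem_nhds (h hc))).mono fun _ => le_of_lt).filter_mono
      nhdsWithin_le_nhds

lemma sum_le_sum_filter_pos {ι M : Type*} [AddCommMonoid M] [LinearOrder M]
    [IsOrderedAddMonoid M] {s t : Finset ι} (hst : s ⊆ t) (φ : ι → M) :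
    ∑ x ∈ s, φ x ≤ ∑ x ∈ t with 0 < φ x, φ x := by
  rw [sum_filter]
  calc ∑ x ∈ s, φ x ≤ ∑ x ∈ s, if 0 < φ x then φ x else 0 :=
        sum_le_sum fun x _ => by split_ifs with h <;> [exact le_rfl; exact not_lt.1 h]
  _ ≤ _ := sum_le_sum_of_subset_of_nonneg hst fun x _ _ => by
        split_ifs with h <;> [exact h.le; exact le_rfl]

namespace BipartiteFlow

variable {α β : Type*} [Fintype α] [Fintype β]
  {u : α → β → ℝ} {p : α → ℝ} {q : β → ℝ} {w c : α → β → ℝ}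

def IsFeasible (u : α → β → ℝ) (p : α → ℝ) (q : β → ℝ) (w : α → β → ℝ) : Prop :=
  (∀ x y, 0 ≤ w x y ∧ w x y ≤ u x y) ∧ (∀ x, ∑ y, w x y ≤ p x) ∧ ∀ y, ∑ x, w x y ≤ q y

lemma IsFeasible.eventually_add_smul (hw : IsFeasible u p q w)
    (hc_pos : ∀ x y, 0 < c x y → w x y < u x y) (hc_neg : ∀ x y, c x y < 0 → 0 < w x y)
    (hc_row : ∀ x, 0 < ∑ y, c x y → ∑ y, w x y < p x)
    (hc_col : ∀ y, 0 < ∑ x, c x y → ∑ x, w x y < q y) :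
    ∀ᶠ ε in 𝓝[>] (0 : ℝ), IsFeasible u p q (w + ε • c) := by
  obtain ⟨hbox, hrow, hcol⟩ := hw
  simp only [IsFeasible, Pi.add_apply, Pi.smul_apply, smul_eq_mul, sum_add_distrib,
    ← mul_sum, eventually_and, eventually_all]
  refine ⟨fun x y => ⟨?_, ?_⟩, fun x => ?_, fun y => ?_⟩
  · refine (eventually_add_mul_le (neg_nonpos.2 (hbox x y).1) (b := 0) (c := -c x y)
      fun h => ?_).mono fun ε hε => by linarith
    linarith [hc_neg x y (by linarith)]
  · exact eventually_add_mul_le (hbox x y).2 (hc_pos x y)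
  · exact eventually_add_mul_le (hrow x) (hc_row x)
  · exact eventually_add_mul_le (hcol y) (hc_col y)

lemma isCompact_setOf_isFeasible : IsCompact {w | IsFeasible u p q w} := by
  have hbox : IsCompact (Set.univ.pi fun x => Set.univ.pi fun y => Set.Icc 0 (u x y)) :=
    isCompact_univ_pi fun _ => isCompact_univ_pi fun _ => isCompact_Icc
  refine hbox.of_isClosed_subset ?_ fun w hw =>
    Set.mem_univ_pi.2 fun x => Set.mem_univ_pi.2 fun y => hw.1 x y
  simp only [IsFeasible, Set.ofPred_and, Set.ofPred_forall]
  refine .inter (isClosed_iInter fun x => isClosed_iInter fun y => .inter ?_ ?_)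
    (.inter (isClosed_iInter fun x => ?_) (isClosed_iInter fun y => ?_)) <;>
  exact isClosed_le (by fun_prop) (by fun_prop)

lemma exists_isFeasible_forall_total_le (hu : 0 ≤ u) (hp : 0 ≤ p) (hq : 0 ≤ q) :
    ∃ w, IsFeasible u p q w ∧
      ∀ w', IsFeasible u p q w' → ∑ x, ∑ y, w' x y ≤ ∑ x, ∑ y, w x y := by
  have h0 : IsFeasible u p q 0 := ⟨fun x y => ⟨le_rfl, hu x y⟩, fun x => by simpa using hp x,
    fun y => by simpa using hq y⟩
  obtain ⟨w, hw, hmax⟩ := isCompact_setOf_isFeasible.exists_isMaxOn ⟨0, h0⟩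
    (Continuous.continuousOn (f := fun w : α → β → ℝ => ∑ x, ∑ y, w x y) (by fun_prop))
  exact ⟨w, hw, fun w' hw' => hmax hw'⟩

/-- Reachability in the residual graph of the flow `w`, from the rows with spare capacity. -/
inductive Reachable (u : α → β → ℝ) (p : α → ℝ) (w : α → β → ℝ) : α ⊕ β → Prop
  | source {x : α} : ∑ y, w x y < p x → Reachable u p w (.inl x)
  | forward {x : α} {y : β} : Reachable u p w (.inl x) → w x y < u x y → Reachable u p w (.inr y)
  | backward {x : α} {y : β} : Reachable u p w (.inr y) → 0 < w x y → Reachable u p w (.inl x)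

open scoped Classical in
/-- `c` is the signed incidence vector of an alternating walk from the source `x₀` to `v`. -/
lemma Reachable.exists_augmenting {v : α ⊕ β} (hv : Reachable u p w v) :
    ∃ x₀, ∑ y, w x₀ y < p x₀ ∧ ∃ c : α → β → ℝ,
      (∀ x y, 0 < c x y → w x y < u x y) ∧ (∀ x y, c x y < 0 → 0 < w x y) ∧
      (∀ x, ∑ y, c x y = (if x = x₀ then 1 else 0) - if .inl x = v then 1 else 0) ∧
      ∀ y, ∑ x, c x y = if .inr y = v then 1 else 0 := by
  induction hv with
  | @source x hx => exact ⟨x, hx, 0, by simp, by simp, by simp [eq_comm], by simp⟩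
  | @forward x y _ hxy ih =>
    obtain ⟨x₀, hx₀, c, hpos, hneg, hrow, hcol⟩ := ih
    refine ⟨x₀, hx₀, fun a b => c a b + if a = x ∧ b = y then 1 else 0, fun a b h => ?_,
      fun a b h => ?_, fun a => ?_, fun b => ?_⟩
    · by_cases hab : a = x ∧ b = y
      · obtain ⟨rfl, rfl⟩ := hab; exact hxy
      · simp only [hab, if_false, add_zero] at h; exact hpos a b h
    · by_cases hab : a = x ∧ b = y
      · obtain ⟨rfl, rfl⟩ := hab; simp only [and_self, if_true] at h; exact hneg a b (by linarith)
      · simp only [hab, if_false, add_zero] at h; exact hneg a b h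
    · simp [sum_add_distrib, hrow, ite_and]
    · simp [sum_add_distrib, hcol, ite_and]
  | @backward x y _ hxy ih =>
    obtain ⟨x₀, hx₀, c, hpos, hneg, hrow, hcol⟩ := ih
    refine ⟨x₀, hx₀, fun a b => c a b - if a = x ∧ b = y then 1 else 0, fun a b h => ?_,
      fun a b h => ?_, fun a => ?_, fun b => ?_⟩
    · by_cases hab : a = x ∧ b = y
      · obtain ⟨rfl, rfl⟩ := hab; simp only [and_self, if_true] at h; exact hpos a b (by linarith)
      · simp only [hab, if_false, sub_zero] at h; exact hpos a b h
    · by_cases hab : a = x ∧ b = y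
      · obtain ⟨rfl, rfl⟩ := hab; exact hxy
      · simp only [hab, if_false, sub_zero] at h; exact hneg a b h
    · simp [sum_sub_distrib, hrow, ite_and]
    · simp [sum_sub_distrib, hcol, ite_and]

lemma IsFeasible.colSum_eq_of_reachable (hw : IsFeasible u p q w)
    (hmax : ∀ w', IsFeasible u p q w' → ∑ x, ∑ y, w' x y ≤ ∑ x, ∑ y, w x y)
    {y : β} (hy : Reachable u p w (.inr y)) : ∑ x, w x y = q y := by
  classical
  by_contra hne
  have hlt := lt_of_le_of_ne (hw.2.2 y) hne
  obtain ⟨x₀, hx₀, c, hpos, hneg, hrow, hcol⟩ := hy.exists_augmenting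
  have hc_row : ∀ x, 0 < ∑ y, c x y → ∑ y, w x y < p x := fun x hx => by
    rcases eq_or_ne x x₀ with rfl | hx₀x
    · exact hx₀
    · simp [hrow, hx₀x] at hx
  have hc_col : ∀ y', 0 < ∑ x, c x y' → ∑ x, w x y' < q y' := fun y' hy' => by
    rcases eq_or_ne y' y with rfl | hyy'
    · exact hlt
    · simp [hcol, hyy'] at hy'
  obtain ⟨ε, hε, hεpos⟩ :=
    ((hw.eventually_add_smul hpos hneg hc_row hc_col).and self_mem_nhdsWithin).exists
  have htot : ∑ x, ∑ y, c x y = 1 := by rw [sum_comm]; simp [hcol]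
  have := hmax _ hε
  simp only [Pi.add_apply, Pi.smul_apply, smul_eq_mul, sum_add_distrib, ← mul_sum, htot] at this
  linarith

theorem exists_isFeasible_rowSum_eq [DecidableEq β] (hu : 0 ≤ u) (hp : 0 ≤ p) (hq : 0 ≤ q)
    (hcut : ∀ (A : Finset α) (B : Finset β),
      ∑ x ∈ A, p x ≤ ∑ y ∈ B, q y + ∑ x ∈ A, ∑ y ∈ Bᶜ, u x y) :
    ∃ w, IsFeasible u p q w ∧ ∀ x, ∑ y, w x y = p x := by
  classical
  obtain ⟨w, hw, hmax⟩ := exists_isFeasible_forall_total_le hu hp hq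
  refine ⟨w, hw, ?_⟩
  -- the reachable rows `A` and columns `B` of a maximum flow form a minimum cut
  set A := univ.filter fun x => Reachable u p w (.inl x)
  set B := univ.filter fun y => Reachable u p w (.inr y)
  have hA {x} : x ∈ A ↔ Reachable u p w (.inl x) := by simp [A]
  have hB {y} : y ∈ B ↔ Reachable u p w (.inr y) := by simp [B]
  have row_full (x) (hx : x ∈ Aᶜ) : ∑ y, w x y = p x :=
    (hw.2.1 x).eq_of_not_lt fun h => mem_compl.1 hx (hA.2 (.source h))
  have cut_full (x) (hx : x ∈ A) (y) (hy : y ∈ Bᶜ) : w x y = u x y :=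
    (hw.1 x y).2.eq_of_not_lt fun h => mem_compl.1 hy (hB.2 ((hA.1 hx).forward h))
  have back_empty (y) (hy : y ∈ B) (x) (hx : x ∉ A) : w x y = 0 :=
    ((hw.1 x y).1.eq_of_not_lt fun h => hx (hA.2 ((hB.1 hy).backward h))).symm
  have col_full (y) (hy : y ∈ B) : ∑ x, w x y = q y := hw.colSum_eq_of_reachable hmax (hB.1 hy)
  have hqB : ∑ y ∈ B, q y = ∑ x ∈ A, ∑ y ∈ B, w x y := by
    rw [sum_comm]
    refine sum_congr rfl fun y hy => ?_
    rw [← col_full y hy, sum_subset (subset_univ A) fun x _ hx => back_empty y hy x hx]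
  have : ∑ x, p x ≤ ∑ x, ∑ y, w x y :=
    calc ∑ x, p x = ∑ x ∈ A, p x + ∑ x ∈ Aᶜ, p x := (sum_add_sum_compl _ _).symm
    _ ≤ ∑ y ∈ B, q y + ∑ x ∈ A, ∑ y ∈ Bᶜ, u x y + ∑ x ∈ Aᶜ, p x := by gcongr; exact hcut A B
    _ = ∑ x ∈ A, (∑ y ∈ B, w x y + ∑ y ∈ Bᶜ, w x y) + ∑ x ∈ Aᶜ, ∑ y, w x y := by
      rw [sum_add_distrib, hqB, sum_congr rfl row_full]
      congr 2
      exact sum_congr rfl fun x hx => (sum_congr rfl (cut_full x hx)).symm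
    _ = ∑ x, ∑ y, w x y := by simp only [sum_add_sum_compl]
  exact fun x => (sum_eq_sum_iff_of_le fun x _ => hw.2.1 x).1
    (le_antisymm (sum_le_sum fun x _ => hw.2.1 x) this) x (mem_univ x)

end BipartiteFlow

section Graph

variable {V : Type*} [Fintype V] {G : SimpleGraph V} [DecidableRel G.Adj]

lemma isFracFactor_symmetrize {r : V → ℕ} {w : V → V → ℝ}
    (hw : ∀ x y, 0 ≤ w x y ∧ w x y ≤ if G.Adj x y then 1 else 0)
    (hrow : ∀ x, ∑ y, w x y = r x) (hcol : ∀ y, ∑ x, w x y = r y) :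
    IsFracFactor G r fun x y => (w x y + w y x) / 2 := by
  refine ⟨fun x y => by simp only [add_comm], fun x y => ?_, fun x y hxy => ?_, fun x => ?_⟩
  · have := hw x y; have := hw y x
    constructor <;> split_ifs at * <;> linarith
  · have hxy' := (hw x y).2; have hyx' := (hw y x).2
    rw [if_neg hxy] at hxy'
    rw [if_neg fun h => hxy h.symm] at hyx'
    linarith [(hw x y).1, (hw y x).1]
  · rw [← sum_div, sum_add_distrib, hrow, hcol]
    ring

variable [DecidableEq V]

lemma eBtw_comm (S T : Finset V) : eBtw G S T = eBtw G T S := by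
  simp only [eBtw, card_filter]
  rw [sum_comm]
  simp only [G.adj_comm]

lemma eBtw_mono_right (S : Finset V) {T T' : Finset V} (h : T ⊆ T') : eBtw G S T ≤ eBtw G S T' :=
  sum_le_sum fun _ _ => card_le_card (filter_subset_filter _ h)

lemma degOut_sdiff (S T : Finset V) (x : V) :
    degOut G (S \ T) x = degOut G S x + ((S ∩ T).filter fun y => G.Adj x y).card := by
  have : (S \ T)ᶜ = Sᶜ ∪ (S ∩ T) := by ext; simp; tauto
  rw [degOut, degOut, this, filter_union, card_union_of_disjoint]
  exact disjoint_filter_filter (disjoint_compl_left.mono_right inter_subset_left)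

lemma sum_le_of_forall_disjoint {r : V → ℕ}
    (h : ∀ S T : Finset V, Disjoint S T → ∑ x ∈ T, r x ≤ ∑ x ∈ S, r x + ∑ x ∈ T, degOut G S x)
    (S T : Finset V) : ∑ x ∈ T, r x ≤ ∑ x ∈ S, r x + ∑ x ∈ T, degOut G S x := by
  have hsplit := h (S \ T) (T \ S) disjoint_sdiff_sdiff
  have hedge : ∑ x ∈ T \ S, ((S ∩ T).filter fun y => G.Adj x y).card ≤
      ∑ x ∈ S ∩ T, degOut G S x :=
    (eBtw_comm (T \ S) (S ∩ T)).trans_le (eBtw_mono_right _ fun x hx => by simp_all)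
  simp only [degOut_sdiff, sum_add_distrib] at hsplit
  rw [← sum_inter_add_sum_sdiff T S, ← sum_inter_add_sum_sdiff S T, inter_comm T S,
    ← sum_inter_add_sum_sdiff T S (degOut G S), inter_comm T S]
  omega

lemma IsFracFactor.sum_le {r : V → ℕ} {h : V → V → ℝ} (hh : IsFracFactor G r h)
    (S T : Finset V) : ∑ x ∈ T, r x ≤ ∑ x ∈ S, r x + ∑ x ∈ T, degOut G S x := by
  obtain ⟨hsymm, hbound, hsupp, hdeg⟩ := hh
  have hS : ∑ x ∈ T, ∑ y ∈ S, h x y ≤ ∑ y ∈ S, (r y : ℝ) := by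
    rw [sum_comm]
    refine sum_le_sum fun y _ => ?_
    simp only [← hdeg y, hsymm _ y]
    exact sum_le_sum_of_subset_of_nonneg (subset_univ T) fun x _ _ => (hbound y x).1
  have hSc (x : V) : ∑ y ∈ Sᶜ, h x y ≤ degOut G S x := by
    rw [degOut, ← sum_boole]
    refine sum_le_sum fun y _ => ?_
    split_ifs with hxy
    · exact (hbound x y).2
    · exact (hsupp x y hxy).le
  have : ∑ x ∈ T, (r x : ℝ) ≤ ∑ x ∈ S, (r x : ℝ) + ∑ x ∈ T, (degOut G S x : ℝ) :=
    calc ∑ x ∈ T, (r x : ℝ) = ∑ x ∈ T, ∑ y ∈ S, h x y + ∑ x ∈ T, ∑ y ∈ Sᶜ, h x y := by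
          simp only [← hdeg, ← sum_add_distrib, sum_add_sum_compl]
    _ ≤ _ := add_le_add hS (sum_le_sum fun x _ => hSc x)
  exact_mod_cast this

lemma hasFracFactor_of_sum_le {r : V → ℕ}
    (h : ∀ S T : Finset V, ∑ x ∈ T, r x ≤ ∑ x ∈ S, r x + ∑ x ∈ T, degOut G S x) :
    HasFracFactor G r := by
  obtain ⟨w, ⟨hbox, -, hcol⟩, hrow⟩ :=
    BipartiteFlow.exists_isFeasible_rowSum_eq (u := fun x y => if G.Adj x y then 1 else 0)
      (p := fun x => (r x : ℝ)) (q := fun x => (r x : ℝ))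
      (fun x y => by positivity) (fun x => by positivity) (fun x => by positivity)
      fun A B => by simpa only [sum_boole] using (by exact_mod_cast h B A)
  have hcol_eq : ∀ y, ∑ x, w x y = r y := by
    have htot : ∑ y, ∑ x, w x y = ∑ y, (r y : ℝ) := by
      rw [sum_comm]; exact sum_congr rfl fun x _ => hrow x
    exact fun y => (sum_eq_sum_iff_of_le fun y _ => hcol y).1 htot y (mem_univ y)
  exact ⟨_, isFracFactor_symmetrize hbox hrow hcol_eq⟩

lemma hasFracFactor_iff_sum_le {r : V → ℕ} :
    HasFracFactor G r ↔
      ∀ S T : Finset V, ∑ x ∈ T, r x ≤ ∑ x ∈ S, r x + ∑ x ∈ T, degOut G S x :=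
  ⟨fun ⟨_, hh⟩ => hh.sum_le, hasFracFactor_of_sum_le⟩

lemma HasAllFrac.sum_le {g f : V → ℕ} (hgf : ∀ x, g x ≤ f x) (h : HasAllFrac G g f)
    {S T : Finset V} (hST : Disjoint S T) :
    ∑ x ∈ T, f x ≤ ∑ x ∈ S, g x + ∑ x ∈ T, degOut G S x := by
  have hr (x : V) : g x ≤ (if x ∈ T then f x else g x) ∧ (if x ∈ T then f x else g x) ≤ f x := by
    split_ifs <;> simp [hgf x]
  have := hasFracFactor_iff_sum_le.1 (h _ hr) S T
  rwa [sum_congr rfl fun x hx => if_pos hx,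
    sum_congr rfl fun x hx => if_neg (disjoint_left.1 hST hx)] at this

lemma sum_le_of_lu_condition {g f r : V → ℕ} (hr : ∀ x, g x ≤ r x ∧ r x ≤ f x)
    (hLu : ∀ S T : Finset V, T = Sᶜ.filter (fun x => degOut G S x < f x) →
      (∑ x ∈ S, (g x : ℤ)) + ∑ x ∈ T, (degOut G S x : ℤ) - ∑ x ∈ T, (f x : ℤ) ≥ 0)
    {S T : Finset V} (hST : Disjoint S T) :
    ∑ x ∈ T, r x ≤ ∑ x ∈ S, r x + ∑ x ∈ T, degOut G S x := by
  set φ : V → ℤ := fun x => f x - degOut G S x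
  have hfilter : Sᶜ.filter (fun x => degOut G S x < f x) = Sᶜ.filter (fun x => 0 < φ x) :=
    filter_congr fun x _ => by simp [φ]
  have hT := sum_le_sum_filter_pos (subset_compl_iff_disjoint_left.2 hST) φ
  have hdef := hLu S _ hfilter.symm
  simp only [φ, sum_sub_distrib] at hT hdef
  have hS : ∑ x ∈ S, (g x : ℤ) ≤ ∑ x ∈ S, (r x : ℤ) :=
    sum_le_sum fun x _ => by exact_mod_cast (hr x).1
  have hT' : ∑ x ∈ T, (r x : ℤ) ≤ ∑ x ∈ T, (f x : ℤ) :=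
    sum_le_sum fun x _ => by exact_mod_cast (hr x).2
  zify
  linarith

end Graph

theorem stmt2_general {V : Type*} [Fintype V] [DecidableEq V] (G : SimpleGraph V)
    [DecidableRel G.Adj]
    (g f : V → ℕ) (hgf : ∀ x, g x ≤ f x) :
    HasAllFrac G g f ↔
      ∀ S T : Finset V, T = Sᶜ.filter (fun x => degOut G S x < f x) →
        (∑ x ∈ S, (g x : ℤ)) + ∑ x ∈ T, (degOut G S x : ℤ) - ∑ x ∈ T, (f x : ℤ) ≥ 0 := by
  refine ⟨fun hall S T hT => ?_, fun hLu r hr => ?_⟩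
  · have := hall.sum_le hgf (hT ▸ disjoint_compl_right.mono_right (filter_subset _ _))
    zify at this
    linarith
  · exact hasFracFactor_iff_sum_le.2
      (sum_le_of_forall_disjoint fun _ _ hST => sum_le_of_lu_condition hr hLu hST)

/-- Lu's theorem (Theorem 4): `G` has all fractional `(g,f)`-factors iff the
deficiency condition holds for every `S`. -/
theorem stmt2 {V : Type*} [Fintype V] [DecidableEq V] (G : SimpleGraph V)
    [DecidableRel G.Adj]
    (g f : V → ℕ) (hg : ∀ x, 1 ≤ g x) (hgf : ∀ x, g x ≤ f x) :
    HasAllFrac G g f ↔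
      ∀ S T : Finset V, T = Sᶜ.filter (fun x => degOut G S x < f x) →
        (∑ x ∈ S, (g x : ℤ)) + ∑ x ∈ T, (degOut G S x : ℤ) - ∑ x ∈ T, (f x : ℤ) ≥ 0 :=
  stmt2_general G g f hgf
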